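/- arXiv:1707.03190 — 2 statements merged into one kernel-verified Lean document; each statement's English description precedes it below -/
import Mathlib

section
/- Let f(x) = (1/n)∑_{i=1}^n f_i(x) with each f_i convex and L-smooth. Fix x̃, x, and draw a mini-batch I of size b uniformly at random (without replacement) from {1,…,n}. Define g = (1/b)∑_{i∈I}(∇f_i(x) − ∇f_i(x̃)) + ∇f(x̃). Then E[‖g − ∇f(x)‖²] ≤ 2L·δ(b)·( f(x̃) − f(x) + ⟨∇f(x), x − x̃⟩ ), where δ(b) = (n−b)/(b(n−1)). -/
/-!
The error `g I - ∇f(x)` is `(1/b) ∑_{i ∈ I} aᵢ - ā`, where `aᵢ = ∇fᵢ(x) - ∇fᵢ(x̃)` and `ā` is their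
mean: the deviation of a sample mean drawn without replacement. Averaged over all `b`-subsets its
squared norm is exactly `(n - b)/(b(n - 1))` times the population variance `(1/n) ∑ ‖aᵢ - ā‖²`
(after centring, `‖∑_{i ∈ I} vᵢ‖² = -∑_{i ∈ I, j ∉ I} ⟪vᵢ, vⱼ⟫`, and each ordered pair `i ≠ j` is
split by exactly `C(n-2, b-1)` subsets); the variance is at most the second moment
`(1/n) ∑ ‖aᵢ‖²`. Cocoercivity of convex `L`-smooth functions,
`‖aᵢ‖² ≤ 2L (fᵢ(x̃) - fᵢ(x) + ⟪∇fᵢ(x), x - x̃⟫)`, then averages to the right-hand side.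
-/

open RealInnerProductSpace Finset

section Smooth

variable {E : Type*} [NormedAddCommGroup E] [InnerProductSpace ℝ E] [CompleteSpace E]
  {h : E → ℝ} {x : E} {L : ℝ}

theorem HasGradientAt.fun_sum {ι : Type*} {s : Finset ι} {h : ι → E → ℝ} {h' : ι → E}
    (H : ∀ i ∈ s, HasGradientAt (h i) (h' i) x) :
    HasGradientAt (fun y => ∑ i ∈ s, h i y) (∑ i ∈ s, h' i) x := by
  rw [hasGradientAt_iff_hasFDerivAt, map_sum]
  exact HasFDerivAt.fun_sum fun i hi => (H i hi).hasFDerivAt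

theorem HasGradientAt.const_mul {h' : E} (H : HasGradientAt h h' x) (c : ℝ) :
    HasGradientAt (fun y => c * h y) (c • h') x := by
  rw [hasGradientAt_iff_hasFDerivAt, map_smul]
  exact H.hasFDerivAt.const_mul c

theorem DifferentiableAt.hasDerivAt_comp_add_smul {z w : E} {t : ℝ}
    (hd : DifferentiableAt ℝ h (z + t • w)) :
    HasDerivAt (fun s : ℝ => h (z + s • w)) ⟪gradient h (z + t • w), w⟫ t := by
  have hline : HasDerivAt (fun s : ℝ => z + s • w) w t := by
    simpa using ((hasDerivAt_id t).smul_const w).const_add z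
  simpa [InnerProductSpace.toDual_apply_apply, Function.comp_def] using
    hd.hasGradientAt.hasFDerivAt.comp_hasDerivAt t hline

theorem ConvexOn.add_inner_gradient_le (hconv : ConvexOn ℝ Set.univ h)
    (hd : DifferentiableAt ℝ h x) (y : E) :
    h x + ⟪gradient h x, y - x⟫ ≤ h y := by
  have hline : ConvexOn ℝ Set.univ (fun s : ℝ => h (x + s • (y - x))) := by
    simpa [Function.comp_def, AffineMap.lineMap_apply, add_comm] using
      hconv.comp_affineMap (AffineMap.lineMap x y : ℝ →ᵃ[ℝ] E)
  have hderiv := DifferentiableAt.hasDerivAt_comp_add_smul (w := y - x) (t := 0)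
    (by simpa using hd)
  have hslope := hline.le_slope_of_hasDerivAt (Set.mem_univ 0) (Set.mem_univ 1) one_pos hderiv
  simp only [slope_def_field, zero_smul, add_zero, one_smul, add_sub_cancel] at hslope
  linarith

theorem le_add_inner_gradient_add_sq (hd : Differentiable ℝ h)
    (hlip : ∀ a b, ‖gradient h a - gradient h b‖ ≤ L * ‖a - b‖) (x y : E) :
    h y ≤ h x + ⟪gradient h x, y - x⟫ + L / 2 * ‖y - x‖ ^ 2 := by
  set w := y - x
  -- the gap between `h` and its quadratic upper model along the segment is nonincreasing
  set ψ : ℝ → ℝ := fun t => h (x + t • w) - t * ⟪gradient h x, w⟫ - L / 2 * t ^ 2 * ‖w‖ ^ 2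
  have hψ : ∀ t, HasDerivAt ψ
      (⟪gradient h (x + t • w), w⟫ - ⟪gradient h x, w⟫ - L * t * ‖w‖ ^ 2) t := by
    intro t
    have hderiv := (((hd (x + t • w)).hasDerivAt_comp_add_smul).sub ((hasDerivAt_id t).mul_const
      ⟪gradient h x, w⟫)).sub (((hasDerivAt_pow 2 t).const_mul (L / 2)).mul_const (‖w‖ ^ 2))
    exact hderiv.congr_deriv (by push_cast; ring)
  have hanti : AntitoneOn ψ (Set.Ici 0) := by
    refine antitoneOn_of_deriv_nonpos (convex_Ici 0)
      (fun t _ => (hψ t).continuousAt.continuousWithinAt)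
      (fun t _ => (hψ t).differentiableAt.differentiableWithinAt) fun t ht => ?_
    rw [interior_Ici, Set.mem_Ioi] at ht
    rw [(hψ t).deriv, ← inner_sub_left]
    have hstep : ‖gradient h (x + t • w) - gradient h x‖ ≤ L * (t * ‖w‖) := by
      simpa [norm_smul, abs_of_pos ht] using hlip (x + t • w) x
    nlinarith [real_inner_le_norm (gradient h (x + t • w) - gradient h x) w, norm_nonneg w]
  have hends := hanti (Set.mem_Ici.2 le_rfl) (Set.mem_Ici.2 zero_le_one) zero_le_one
  simp only [ψ, w, zero_smul, one_smul, add_zero, add_sub_cancel, zero_mul, one_mul, mul_one,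
    sub_zero, ne_eq, OfNat.ofNat_ne_zero, not_false_eq_true, zero_pow, mul_zero, one_pow] at hends
  linarith

theorem ConvexOn.norm_gradient_sub_sq_le (hconv : ConvexOn ℝ Set.univ h) (hd : Differentiable ℝ h)
    (hL : 0 < L) (hlip : ∀ a b, ‖gradient h a - gradient h b‖ ≤ L * ‖a - b‖) (x y : E) :
    ‖gradient h x - gradient h y‖ ^ 2 ≤ 2 * L * (h y - h x + ⟪gradient h x, x - y⟫) := by
  set u := gradient h y - gradient h x
  -- compare the linear lower bound at `x` with the quadratic upper bound at `y`,
  -- at the minimiser `y - L⁻¹ • u` of the latter's gap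
  have hlower := hconv.add_inner_gradient_le (hd x) (y - L⁻¹ • u)
  have hupper := le_add_inner_gradient_add_sq hd hlip y (y - L⁻¹ • u)
  have hu : ⟪gradient h y, u⟫ = ⟪gradient h x, u⟫ + ‖u‖ ^ 2 := by
    rw [← real_inner_self_eq_norm_sq, ← inner_add_left, add_sub_cancel]
  rw [sub_sub_cancel_left, norm_neg, norm_smul, Real.norm_eq_abs, abs_inv, abs_of_pos hL,
    inner_neg_right, real_inner_smul_right, hu] at hupper
  rw [sub_right_comm, inner_sub_right, real_inner_smul_right, ← neg_sub x y, inner_neg_right]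
    at hlower
  have hsq : L / 2 * (L⁻¹ * ‖u‖) ^ 2 = L⁻¹ * ‖u‖ ^ 2 / 2 := by field_simp
  have hgap : L⁻¹ * ‖u‖ ^ 2 / 2 ≤ h y - h x + ⟪gradient h x, x - y⟫ := by linarith
  rw [norm_sub_rev]
  calc ‖u‖ ^ 2 = 2 * L * (L⁻¹ * ‖u‖ ^ 2 / 2) := by field_simp
    _ ≤ _ := by gcongr

end Smooth

theorem Nat.choose_mul_add_one_mul_add_two (m k : ℕ) :
    m.choose k * ((m + 1) * (m + 2)) = (m + 2).choose (k + 1) * ((k + 1) * (m + 1 - k)) := by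
  calc m.choose k * ((m + 1) * (m + 2)) = (m + 2) * ((m + 1).choose k * (m + 1 - k)) := by
        rw [← Nat.choose_mul_succ_eq]; ring
    _ = (m + 2).choose (k + 1) * ((k + 1) * (m + 1 - k)) := by
        rw [← mul_assoc, Nat.add_one_mul_choose_eq, mul_assoc]

theorem sub_div_mul_sub_one_nonneg {n b : ℕ} (hbn : b ≤ n) : 0 ≤ (n - b : ℝ) / (b * (n - 1)) := by
  rcases Nat.eq_zero_or_pos n with rfl | hn
  · simp [Nat.le_zero.1 hbn]
  · have hb : (b : ℝ) ≤ n := by exact_mod_cast hbn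
    have hn : (1 : ℝ) ≤ n := by exact_mod_cast hn
    exact div_nonneg (by linarith) (mul_nonneg b.cast_nonneg (by linarith))

section Sampling

variable {ι E : Type*} [Fintype ι] [NormedAddCommGroup E] [InnerProductSpace ℝ E]

theorem card_filter_mem_notMem_powersetCard [DecidableEq ι] {i j : ι} (hij : i ≠ j) {b : ℕ}
    (hb : 0 < b) :
    #{I ∈ powersetCard b (univ : Finset ι) | i ∈ I ∧ j ∉ I} =
      (Fintype.card ι - 2).choose (b - 1) := by
  have hfilter : {I ∈ powersetCard b (univ : Finset ι) | i ∈ I ∧ j ∉ I} =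
      {I ∈ powersetCard b (univ.erase j) | {i} ⊆ I} := by
    ext I
    simp only [mem_filter, mem_powersetCard, subset_erase, singleton_subset_iff, subset_univ,
      true_and]
    tauto
  rw [hfilter, card_filter_powersetCard_subset _ _ _ (by simpa using hij)
      (by rw [card_singleton]; exact hb), card_erase_of_mem (mem_univ j), card_singleton,
    card_univ, Nat.sub_sub]

theorem sum_sum_sum_compl_eq_sum_sum_card_mul [DecidableEq ι] (P : Finset (Finset ι))
    (F : ι → ι → ℝ) :
    ∑ I ∈ P, ∑ i ∈ I, ∑ j ∈ Iᶜ, F i j = ∑ i, ∑ j, (#{I ∈ P | i ∈ I ∧ j ∉ I} : ℝ) * F i j := by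
  simp_rw [card_filter, Nat.cast_sum, sum_mul, Nat.cast_ite, ite_mul, Nat.cast_one, one_mul,
    Nat.cast_zero, zero_mul]
  have hI : ∀ I : Finset ι,
      ∑ i ∈ I, ∑ j ∈ Iᶜ, F i j = ∑ i, ∑ j, if i ∈ I ∧ j ∉ I then F i j else 0 := by
    intro I
    simp_rw [← Fintype.sum_ite_mem I, ← Fintype.sum_ite_mem Iᶜ, ite_sum_zero, ite_and, mem_compl]
  simp_rw [hI]
  rw [sum_comm]
  exact sum_congr rfl fun i _ => sum_comm

theorem sum_powersetCard_norm_sum_sq {v : ι → E} (hv : ∑ i, v i = 0) {b : ℕ} (hb : 0 < b) :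
    ∑ I ∈ powersetCard b univ, ‖∑ i ∈ I, v i‖ ^ 2 =
      (Fintype.card ι - 2).choose (b - 1) * ∑ i, ‖v i‖ ^ 2 := by
  classical
  set C : ℝ := ↑((Fintype.card ι - 2).choose (b - 1) : ℕ)
  have hnorm : ∀ I : Finset ι, ‖∑ i ∈ I, v i‖ ^ 2 = -∑ i ∈ I, ∑ j ∈ Iᶜ, ⟪v i, v j⟫ := by
    intro I
    have hcompl : ∑ j ∈ Iᶜ, v j = -∑ j ∈ I, v j := by
      rw [eq_neg_iff_add_eq_zero, add_comm, sum_add_sum_compl, hv]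
    simp_rw [← inner_sum, ← sum_inner, hcompl, inner_neg_right, neg_neg,
      real_inner_self_eq_norm_sq]
  have hcount : ∀ i j : ι, (#{I ∈ powersetCard b univ | i ∈ I ∧ j ∉ I} : ℝ) =
      C - if i = j then C else 0 := by
    intro i j
    split_ifs with hij
    · simp [hij]
    · rw [card_filter_mem_notMem_powersetCard hij hb, sub_zero]
  have hsum : ∑ i, ∑ j, ⟪v i, v j⟫ = 0 := by
    simp_rw [← inner_sum, ← sum_inner, hv, inner_zero_left]
  simp_rw [hnorm, sum_neg_distrib, sum_sum_sum_compl_eq_sum_sum_card_mul, hcount, sub_mul,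
    ite_mul, zero_mul, sum_sub_distrib, sum_ite_eq, mem_univ, if_true, ← mul_sum, hsum,
    real_inner_self_eq_norm_sq]
  ring

theorem sum_norm_sq_le_sum_norm_add_sq {v : ι → E} (hv : ∑ i, v i = 0) (m : E) :
    ∑ i, ‖v i‖ ^ 2 ≤ ∑ i, ‖v i + m‖ ^ 2 := by
  simp only [norm_add_sq_real, sum_add_distrib, ← mul_sum, ← sum_inner, hv, inner_zero_left,
    mul_zero, add_zero, sum_const, card_univ, nsmul_eq_mul]
  have : 0 ≤ (Fintype.card ι : ℝ) * ‖m‖ ^ 2 := by positivity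
  linarith

theorem average_powersetCard_norm_smul_sum_sq {v : ι → E} (hv : ∑ i, v i = 0) {b : ℕ}
    (hb : 0 < b) (hbn : b ≤ Fintype.card ι) (hn : 2 ≤ Fintype.card ι) :
    (1 / (Fintype.card ι).choose b : ℝ) *
        ∑ I ∈ powersetCard b univ, ‖(1 / b : ℝ) • ∑ i ∈ I, v i‖ ^ 2 =
      (Fintype.card ι - b) / (b * (Fintype.card ι - 1)) *
        (1 / Fintype.card ι * ∑ i, ‖v i‖ ^ 2) := by
  obtain ⟨m, hm⟩ : ∃ m, Fintype.card ι = m + 2 := ⟨Fintype.card ι - 2, by omega⟩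
  obtain ⟨k, rfl⟩ : ∃ k, b = k + 1 := ⟨b - 1, by omega⟩
  have hchoose : (m.choose k : ℝ) * ((m + 1) * (m + 2)) =
      (m + 2).choose (k + 1) * ((k + 1) * (m + 1 - k)) := by
    have hnat := Nat.choose_mul_add_one_mul_add_two m k
    rw [← Nat.cast_inj (R := ℝ)] at hnat
    push_cast [Nat.cast_sub (show k ≤ m + 1 by omega)] at hnat
    linear_combination hnat
  have hchoose_pos : (0 : ℝ) < (m + 2).choose (k + 1) := by
    exact_mod_cast Nat.choose_pos (by omega)
  simp_rw [norm_smul, mul_pow, Real.norm_eq_abs, sq_abs, ← mul_sum,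
    sum_powersetCard_norm_sum_sq hv hb, hm]
  push_cast
  rw [show (m : ℝ) + 2 - 1 = m + 1 by ring]
  field_simp
  linear_combination (∑ i, ‖v i‖ ^ 2) * hchoose

theorem average_powersetCard_norm_sampleMean_sub_mean_sq_le (a : ι → E) {b : ℕ}
    (hb : 0 < b) (hbn : b ≤ Fintype.card ι) (hn : 2 ≤ Fintype.card ι) :
    (1 / (Fintype.card ι).choose b : ℝ) * ∑ I ∈ powersetCard b univ,
        ‖(1 / b : ℝ) • ∑ i ∈ I, a i - (1 / Fintype.card ι : ℝ) • ∑ i, a i‖ ^ 2 ≤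
      (Fintype.card ι - b) / (b * (Fintype.card ι - 1)) *
        (1 / Fintype.card ι * ∑ i, ‖a i‖ ^ 2) := by
  set μ := (1 / Fintype.card ι : ℝ) • ∑ i, a i
  have hsum_sub : ∀ I : Finset ι, ∑ i ∈ I, (a i - μ) = ∑ i ∈ I, a i - (#I : ℝ) • μ := by
    intro I
    rw [sum_sub_distrib, sum_const, Nat.cast_smul_eq_nsmul]
  have hcentered : ∑ i, (a i - μ) = 0 := by
    rw [hsum_sub, card_univ, smul_smul, mul_one_div_cancel (by positivity), one_smul, sub_self]
  have hbatch : ∀ I ∈ powersetCard b univ,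
      (1 / b : ℝ) • ∑ i ∈ I, a i - μ = (1 / b : ℝ) • ∑ i ∈ I, (a i - μ) := by
    intro I hI
    rw [hsum_sub, mem_powersetCard_univ.1 hI, smul_sub, smul_smul,
      one_div_mul_cancel (by positivity), one_smul]
  have hδ := sub_div_mul_sub_one_nonneg hbn
  rw [sum_congr rfl fun I hI => by rw [hbatch I hI],
    average_powersetCard_norm_smul_sum_sq hcentered hb hbn hn]
  gcongr _ * (_ * ?_)
  simpa using sum_norm_sq_le_sum_norm_add_sq hcentered μ

end Sampling

theorem minibatch_svrg_variance_bound {d n b : ℕ} (hn : 2 ≤ n) (hb1 : 1 ≤ b) (hbn : b ≤ n)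
    (fi : Fin n → EuclideanSpace ℝ (Fin d) → ℝ) (L : ℝ) (hL : 0 < L)
    (hconv : ∀ i, ConvexOn ℝ Set.univ (fi i))
    (hdiff : ∀ i, Differentiable ℝ (fi i))
    (hlip : ∀ i x y, ‖gradient (fi i) x - gradient (fi i) y‖ ≤ L * ‖x - y‖)
    (f : EuclideanSpace ℝ (Fin d) → ℝ)
    (hf : f = fun x => (1 / (n : ℝ)) * ∑ i, fi i x)
    (xt x : EuclideanSpace ℝ (Fin d))
    (g : Finset (Fin n) → EuclideanSpace ℝ (Fin d))
    (hg : ∀ I, g I = (1 / (b : ℝ)) •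
        (∑ i ∈ I, (gradient (fi i) x - gradient (fi i) xt)) + gradient f xt) :
    (1 / (n.choose b : ℝ)) *
        ∑ I ∈ Finset.powersetCard b (Finset.univ : Finset (Fin n)),
          ‖g I - gradient f x‖ ^ 2 ≤
      2 * L * ((n - b : ℝ) / (b * (n - 1))) *
        (f xt - f x + ⟪gradient f x, x - xt⟫) := by
  have hgrad : ∀ y, gradient f y = (1 / (n : ℝ)) • ∑ i, gradient (fi i) y := fun y => by
    subst hf
    exact ((HasGradientAt.fun_sum fun i _ => (hdiff i y).hasGradientAt).const_mul _).gradient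
  have hbatch : ∀ I, g I - gradient f x = (1 / (b : ℝ)) • ∑ i ∈ I, (gradient (fi i) x -
      gradient (fi i) xt) - (1 / (n : ℝ)) • ∑ i, (gradient (fi i) x - gradient (fi i) xt) := by
    intro I
    simp only [hg, hgrad, sum_sub_distrib, smul_sub]
    abel
  have hbregman : f xt - f x + ⟪gradient f x, x - xt⟫ =
      1 / n * ∑ i, (fi i xt - fi i x + ⟪gradient (fi i) x, x - xt⟫) := by
    rw [hgrad, real_inner_smul_left, sum_inner, hf]
    simp only [sum_add_distrib, sum_sub_distrib]
    ring
  have hδ := sub_div_mul_sub_one_nonneg hbn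
  simp_rw [hbatch]
  calc _ ≤ (n - b : ℝ) / (b * (n - 1)) *
        (1 / n * ∑ i, ‖gradient (fi i) x - gradient (fi i) xt‖ ^ 2) := by
        simpa using average_powersetCard_norm_sampleMean_sub_mean_sq_le
          (fun i => gradient (fi i) x - gradient (fi i) xt) hb1 (by simpa) (by simpa)
    _ ≤ (n - b : ℝ) / (b * (n - 1)) *
        (1 / n * ∑ i, 2 * L * (fi i xt - fi i x + ⟪gradient (fi i) x, x - xt⟫)) := by
        gcongr with i
        exact (hconv i).norm_gradient_sub_sq_le (hdiff i) hL (hlip i) x xt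
    _ = _ := by rw [hbregman, ← mul_sum]; ring
end

section
/- Let f be μ-strongly convex and L_f-smooth on ℝ^{d₁}, let A ∈ ℝ^{d₂×d₁} have full row rank, and let β > 0. Define λ̃ = −(1/β)(Aᵀ)† ∇f(x̃) and λ* = −(1/β)(Aᵀ)† ∇f(x*), where (Aᵀ)† is the Moore–Penrose pseudo-inverse. Then ‖λ̃ − λ*‖² ≤ (2L_f/(β² σ_min(AAᵀ))) · ( f(x̃) − f(x*) − ⟨∇f(x*), x̃ − x*⟩ ), where σ_min(AAᵀ) is the smallest eigenvalue of AAᵀ. -/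
/-!
Put `g = ∇f(x̃) - ∇f(x*)` and `w = (AAᵀ)⁻¹ A g`, so that `λ̃ - λ* = -β⁻¹ w`. The vector `Aᵀ w`
is the orthogonal projection of `g` onto the row space of `A`, whence
`σ_min ‖w‖² ≤ ⟪w, AAᵀ w⟫ = ‖Aᵀ w‖² ≤ ‖g‖²`. It remains to bound `‖g‖²` by `2 L_f` times the
Bregman divergence `D_f(x̃, x*)` (co-coercivity of the gradient of a convex `L_f`-smooth function):
compare the first-order lower bound at `x*` with the descent-lemma upper bound at `x̃`, both
evaluated at the gradient step `x̃ - L_f⁻¹ g`.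
-/

open RealInnerProductSpace

section Smooth

open Set AffineMap

variable {E : Type*} [NormedAddCommGroup E] [InnerProductSpace ℝ E] [CompleteSpace E]
  {f : E → ℝ} {L : ℝ}

noncomputable def bregmanDiv (f : E → ℝ) (x y : E) : ℝ :=
  f x - f y - ⟪gradient f y, x - y⟫

lemma hasDerivAt_comp_lineMap {x y : E} {t : ℝ} (hf : DifferentiableAt ℝ f (lineMap x y t)) :
    HasDerivAt (fun s : ℝ => f (lineMap x y s)) ⟪gradient f (lineMap x y t), y - x⟫ t :=
  hf.hasGradientAt.hasFDerivAt.comp_hasDerivAt t hasDerivAt_lineMap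

lemma ConvexOn.bregmanDiv_nonneg {s : Set E} (hf : ConvexOn ℝ s f) {x y : E} (hx : x ∈ s)
    (hy : y ∈ s) (hfy : DifferentiableAt ℝ f y) : 0 ≤ bregmanDiv f x y := by
  have hφ : ConvexOn ℝ (lineMap y x ⁻¹' s) (fun t => f (lineMap y x t)) :=
    hf.comp_affineMap (lineMap y x)
  have hslope := hφ.le_slope_of_hasDerivAt (by simpa using hy) (by simpa using hx) one_pos
    (hasDerivAt_comp_lineMap (by simpa using hfy))
  simp only [lineMap_apply_zero, slope_def_field, lineMap_apply_one] at hslope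
  unfold bregmanDiv
  linarith

lemma bregmanDiv_le_of_lipschitz_gradient (hf : Differentiable ℝ f)
    (hL : ∀ x y, ‖gradient f x - gradient f y‖ ≤ L * ‖x - y‖) (x y : E) :
    bregmanDiv f y x ≤ L / 2 * ‖y - x‖ ^ 2 := by
  set c := ⟪gradient f x, y - x⟫
  set K := L / 2 * ‖y - x‖ ^ 2
  let ψ : ℝ → ℝ := fun t => f (lineMap x y t) - t * c - t ^ 2 * K
  have hψ : ∀ t, HasDerivAt ψ (⟪gradient f (lineMap x y t), y - x⟫ - c - 2 * t * K) t := by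
    intro t
    refine (((hasDerivAt_comp_lineMap (hf _)).sub ((hasDerivAt_id t).mul_const c)).sub
      ((hasDerivAt_pow 2 t).mul_const K)).congr_deriv ?_
    simp
  have hψ'_nonpos : ∀ t ∈ interior (Icc (0 : ℝ) 1),
      ⟪gradient f (lineMap x y t), y - x⟫ - c - 2 * t * K ≤ 0 := by
    intro t ht
    rw [interior_Icc] at ht
    refine sub_nonpos.2 ?_
    calc ⟪gradient f (lineMap x y t), y - x⟫ - c
        = ⟪gradient f (lineMap x y t) - gradient f x, y - x⟫ := (inner_sub_left ..).symm
      _ ≤ ‖gradient f (lineMap x y t) - gradient f x‖ * ‖y - x‖ := real_inner_le_norm ..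
      _ ≤ L * ‖lineMap x y t - x‖ * ‖y - x‖ := by gcongr; exact hL ..
      _ = 2 * t * K := by
        rw [lineMap_apply_module', add_sub_cancel_right, norm_smul, Real.norm_of_nonneg ht.1.le]
        ring
  have hanti : AntitoneOn ψ (Icc 0 1) :=
    antitoneOn_of_hasDerivWithinAt_nonpos (convex_Icc 0 1)
      (fun t _ => (hψ t).continuousAt.continuousWithinAt)
      (fun t _ => (hψ t).hasDerivWithinAt) hψ'_nonpos
  have h01 := hanti (left_mem_Icc.2 zero_le_one) (right_mem_Icc.2 zero_le_one) zero_le_one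
  simp only [ψ, lineMap_apply_zero, lineMap_apply_one] at h01
  unfold bregmanDiv
  linarith

lemma sq_norm_sub_gradient_le_bregmanDiv (hL₀ : 0 < L) (hconv : ConvexOn ℝ univ f)
    (hf : Differentiable ℝ f) (hL : ∀ x y, ‖gradient f x - gradient f y‖ ≤ L * ‖x - y‖)
    (x y : E) :
    ‖gradient f x - gradient f y‖ ^ 2 ≤ 2 * L * bregmanDiv f x y := by
  set g := gradient f x - gradient f y
  set z := x - L⁻¹ • g
  have hlower := hconv.bregmanDiv_nonneg (mem_univ z) (mem_univ y) (hf y)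
  have hupper := bregmanDiv_le_of_lipschitz_gradient hf hL x z
  have hinner : ⟪gradient f y, z - y⟫ - ⟪gradient f x, z - x⟫
      = ⟪gradient f y, x - y⟫ + L⁻¹ * ‖g‖ ^ 2 := by
    simp only [z, sub_right_comm x, inner_sub_right,
      real_inner_smul_right, ← real_inner_self_eq_norm_sq, g, inner_sub_left]
    ring
  have hnorm : ‖z - x‖ ^ 2 = L⁻¹ ^ 2 * ‖g‖ ^ 2 := by
    rw [sub_sub_cancel_left, norm_neg, norm_smul, Real.norm_of_nonneg (by positivity), mul_pow]
  have hhalf : L / 2 * ‖z - x‖ ^ 2 = L⁻¹ * ‖g‖ ^ 2 / 2 := by rw [hnorm]; field_simp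
  have hstep : L⁻¹ * ‖g‖ ^ 2 / 2 ≤ bregmanDiv f x y := by
    unfold bregmanDiv at *
    linarith
  calc ‖g‖ ^ 2 = 2 * L * (L⁻¹ * ‖g‖ ^ 2 / 2) := by field_simp
    _ ≤ 2 * L * bregmanDiv f x y := by gcongr

end Smooth

namespace Matrix

lemma isUnit_of_rank_eq_card {n K : Type*} [Fintype n] [DecidableEq n] [Field K]
    {M : Matrix n n K} (h : M.rank = Fintype.card n) : IsUnit M := by
  have hrange : LinearMap.range M.mulVecLin = ⊤ :=
    Submodule.eq_top_of_finrank_eq (by rw [Module.finrank_fintype_fun_eq_card, ← h]; rfl)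
  exact mulVec_surjective_iff_isUnit.1 (LinearMap.range_eq_top.1 hrange)

lemma posDef_mul_transpose_of_rank_eq_card {m n : Type*} [Fintype m] [DecidableEq m] [Fintype n]
    {A : Matrix m n ℝ} (h : A.rank = Fintype.card m) : (A * Aᵀ).PosDef := by
  rw [← conjTranspose_eq_transpose_of_trivial]
  refine (posSemidef_self_mul_conjTranspose A).posDef_iff_isUnit.2 (isUnit_of_rank_eq_card ?_)
  rw [rank_self_mul_conjTranspose, h]

variable {m n : Type*} [Fintype m] [DecidableEq m] [Fintype n] [DecidableEq n]

open MatrixOrder in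
lemma IsHermitian.mul_sq_norm_le_inner_toEuclideanLin {S : Matrix n n ℝ} (hS : S.IsHermitian)
    {σ : ℝ} (hσ : ∀ i, σ ≤ hS.eigenvalues i) (w : EuclideanSpace ℝ n) :
    σ * ‖w‖ ^ 2 ≤ ⟪w, toEuclideanLin S w⟫ := by
  have hle : algebraMap ℝ _ σ ≤ S := by
    rw [algebraMap_le_iff_le_spectrum (a := S) hS.isSelfAdjoint,
      hS.spectrum_real_eq_range_eigenvalues]
    rintro _ ⟨i, rfl⟩
    exact hσ i
  have hquad := (le_iff.1 hle).dotProduct_mulVec_nonneg w.ofLp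
  rw [← real_inner_self_eq_norm_sq, EuclideanSpace.inner_eq_star_dotProduct,
    EuclideanSpace.inner_eq_star_dotProduct]
  simpa [sub_mulVec, Algebra.algebraMap_eq_smul_one, smul_mulVec, toLpLin_apply,
    dotProduct_comm] using hquad

lemma toEuclideanLin_mul_apply {l : Type*} (M : Matrix l m ℝ) (N : Matrix m n ℝ)
    (x : EuclideanSpace ℝ n) :
    toEuclideanLin (M * N) x = toEuclideanLin M (toEuclideanLin N x) := by
  simp [toLpLin_apply, mulVec_mulVec]

lemma inner_toEuclideanLin_transpose (A : Matrix m n ℝ) (w : EuclideanSpace ℝ m)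
    (x : EuclideanSpace ℝ n) : ⟪toEuclideanLin Aᵀ w, x⟫ = ⟪w, toEuclideanLin A x⟫ := by
  rw [← conjTranspose_eq_transpose_of_trivial, toEuclideanLin_conjTranspose_eq_adjoint,
    LinearMap.adjoint_inner_left]

lemma inner_toEuclideanLin_mul_transpose_self (A : Matrix m n ℝ) (w : EuclideanSpace ℝ m) :
    ⟪w, toEuclideanLin (A * Aᵀ) w⟫ = ‖toEuclideanLin Aᵀ w‖ ^ 2 := by
  rw [toEuclideanLin_mul_apply, ← inner_toEuclideanLin_transpose, real_inner_self_eq_norm_sq]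

lemma mul_sq_norm_toEuclideanLin_inv_mul_transpose_mul_le (A : Matrix m n ℝ)
    (hA : IsUnit (A * Aᵀ)) (hH : (A * Aᵀ).IsHermitian) {σ : ℝ}
    (hσ : ∀ i, σ ≤ hH.eigenvalues i)
    (x : EuclideanSpace ℝ n) :
    σ * ‖toEuclideanLin ((A * Aᵀ)⁻¹ * A) x‖ ^ 2 ≤ ‖x‖ ^ 2 := by
  set w := toEuclideanLin ((A * Aᵀ)⁻¹ * A) x
  set p := toEuclideanLin Aᵀ w
  have hSw : toEuclideanLin (A * Aᵀ) w = toEuclideanLin A x := by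
    rw [← toEuclideanLin_mul_apply, ← Matrix.mul_assoc,
      mul_nonsing_inv _ ((isUnit_iff_isUnit_det _).1 hA), Matrix.one_mul]
  have hp : ‖p‖ ^ 2 ≤ ‖p‖ * ‖x‖ := by
    rw [← inner_toEuclideanLin_mul_transpose_self, hSw, ← inner_toEuclideanLin_transpose]
    exact real_inner_le_norm p x
  calc σ * ‖w‖ ^ 2 ≤ ⟪w, toEuclideanLin (A * Aᵀ) w⟫ :=
        hH.mul_sq_norm_le_inner_toEuclideanLin hσ w
    _ = ‖p‖ ^ 2 := inner_toEuclideanLin_mul_transpose_self A w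
    _ ≤ ‖x‖ ^ 2 := by nlinarith [norm_nonneg p, norm_nonneg x]

end Matrix

theorem dual_variable_distance_bound_general {d₁ d₂ : ℕ} (hd₂ : 0 < d₂)
    (f : EuclideanSpace ℝ (Fin d₁) → ℝ) (μ Lf β : ℝ)
    (hμ : 0 < μ) (hLf : 0 < Lf)
    (hdiff : Differentiable ℝ f)
    (hsc : StrongConvexOn Set.univ μ f)
    (hlip : ∀ x y, ‖gradient f x - gradient f y‖ ≤ Lf * ‖x - y‖)
    (A : Matrix (Fin d₂) (Fin d₁) ℝ) (hrank : A.rank = d₂)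
    (hH : (A * A.transpose).IsHermitian)
    (σmin : ℝ) (hσ : σmin = ⨅ i : Fin d₂, hH.eigenvalues i)
    (xt xStar : EuclideanSpace ℝ (Fin d₁))
    (lamt lamStar : EuclideanSpace ℝ (Fin d₂))
    -- since A has full row rank, (Aᵀ)† = (A Aᵀ)⁻¹ A
    (hlamt : lamt = -(1 / β) •
      Matrix.toEuclideanLin ((A * A.transpose)⁻¹ * A) (gradient f xt))
    (hlamStar : lamStar = -(1 / β) •
      Matrix.toEuclideanLin ((A * A.transpose)⁻¹ * A) (gradient f xStar)) :
    ‖lamt - lamStar‖ ^ 2 ≤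
      (2 * Lf / (β ^ 2 * σmin)) *
        (f xt - f xStar - ⟪gradient f xStar, xt - xStar⟫) := by
  have : Nonempty (Fin d₂) := ⟨⟨0, hd₂⟩⟩
  have hPD : (A * A.transpose).PosDef :=
    Matrix.posDef_mul_transpose_of_rank_eq_card (by rwa [Fintype.card_fin])
  have hσle : ∀ i, σmin ≤ hH.eigenvalues i :=
    fun i => hσ ▸ ciInf_le (Set.finite_range _).bddBelow i
  have hσpos : 0 < σmin := by
    obtain ⟨i, hi⟩ := exists_eq_ciInf_of_finite (f := hH.eigenvalues)
    exact hσ ▸ hi ▸ hPD.eigenvalues_pos i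
  set g := gradient f xt - gradient f xStar
  set w := Matrix.toEuclideanLin ((A * A.transpose)⁻¹ * A) g
  have hcoco : ‖g‖ ^ 2 ≤ 2 * Lf * bregmanDiv f xt xStar :=
    sq_norm_sub_gradient_le_bregmanDiv hLf (hsc.strictConvexOn hμ).convexOn hdiff hlip xt xStar
  have hw : ‖w‖ ^ 2 ≤ 2 * Lf * bregmanDiv f xt xStar / σmin := by
    rw [le_div_iff₀ hσpos, mul_comm]
    exact (A.mul_sq_norm_toEuclideanLin_inv_mul_transpose_mul_le hPD.isUnit hH hσle g).trans
      hcoco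
  have hlam : lamt - lamStar = -(1 / β) • w := by rw [hlamt, hlamStar, ← smul_sub, ← map_sub]
  calc ‖lamt - lamStar‖ ^ 2 = (1 / β) ^ 2 * ‖w‖ ^ 2 := by
        rw [hlam, norm_smul, mul_pow, norm_neg, Real.norm_eq_abs, sq_abs]
    _ ≤ (1 / β) ^ 2 * (2 * Lf * bregmanDiv f xt xStar / σmin) := by gcongr
    _ = _ := by unfold bregmanDiv; ring

theorem dual_variable_distance_bound {d₁ d₂ : ℕ} (hd₂ : 0 < d₂)
    (f : EuclideanSpace ℝ (Fin d₁) → ℝ) (μ Lf β : ℝ)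
    (hμ : 0 < μ) (hLf : 0 < Lf) (hβ : 0 < β)
    (hdiff : Differentiable ℝ f)
    (hsc : StrongConvexOn Set.univ μ f)
    (hlip : ∀ x y, ‖gradient f x - gradient f y‖ ≤ Lf * ‖x - y‖)
    (A : Matrix (Fin d₂) (Fin d₁) ℝ) (hrank : A.rank = d₂)
    (hH : (A * A.transpose).IsHermitian)
    (σmin : ℝ) (hσ : σmin = ⨅ i : Fin d₂, hH.eigenvalues i)
    (xt xStar : EuclideanSpace ℝ (Fin d₁))
    (lamt lamStar : EuclideanSpace ℝ (Fin d₂))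
    -- since A has full row rank, (Aᵀ)† = (A Aᵀ)⁻¹ A
    (hlamt : lamt = -(1 / β) •
      Matrix.toEuclideanLin ((A * A.transpose)⁻¹ * A) (gradient f xt))
    (hlamStar : lamStar = -(1 / β) •
      Matrix.toEuclideanLin ((A * A.transpose)⁻¹ * A) (gradient f xStar)) :
    ‖lamt - lamStar‖ ^ 2 ≤
      (2 * Lf / (β ^ 2 * σmin)) *
        (f xt - f xStar - ⟪gradient f xStar, xt - xStar⟫) :=
  dual_variable_distance_bound_general hd₂ f μ Lf β hμ hLf hdiff hsc hlip A hrank hH σmin hσ xt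
    xStar lamt lamStar hlamt hlamStar
end
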